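/- arXiv:1812.07961 — 5 statements merged into one kernel-verified Lean document; each statement's English description precedes it below -/
import Mathlib

section
/- For the metric g on U = {(G,I,E,P) ∈ ℝ⁴ : P ≠ 0}, the Christoffel symbols of the second kind Γᵏᵢⱼ = ½ Σₗ gᵏˡ(∂ᵢ g_{lj} + ∂ⱼ g_{li} − ∂ₗ g_{ij}) are, up to the symmetry Γᵏᵢⱼ = Γᵏⱼᵢ: Γ¹₁₂ = −I/(2P²), Γ¹₁₄ = −1/P, Γ¹₂₃ = −(P²−I²)/(2P²), Γ¹₃₄ = I/P, Γ²₁₃ = 1/(2P²), Γ²₃₃ = −I/P², Γ³₁₂ = −1/(2P²), Γ³₂₃ = I/(2P²), Γ⁴₁₁ = 1/P³, Γ⁴₁₃ = −I/P³, Γ⁴₃₃ = I²/P³, and all other components are zero. -/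
/- Coordinates on ℝ⁴: index 0 = G (x¹), 1 = I (x²), 2 = E (x³), 3 = P (x⁴). -/

open scoped Matrix

/-- The components of the sub-Riemannian metric, as a matrix-valued function on
ℝ⁴: `g₁₁ = 1/P²`, `g₂₂ = 1`, `g₃₃ = 1 + I²/P²`, `g₄₄ = 1`,
`g₁₃ = g₃₁ = −I/P²`, and all other components zero. -/
noncomputable def gMetric (x : Fin 4 → ℝ) : Matrix (Fin 4) (Fin 4) ℝ :=
  !![1 / (x 3) ^ 2, 0, -(x 1) / (x 3) ^ 2, 0;
     0, 1, 0, 0;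
     -(x 1) / (x 3) ^ 2, 0, 1 + (x 1) ^ 2 / (x 3) ^ 2, 0;
     0, 0, 0, 1]

/-- Partial derivative `∂ᵢ f` of a real-valued function on ℝ⁴. -/
noncomputable def pd (f : (Fin 4 → ℝ) → ℝ) (i : Fin 4) (x : Fin 4 → ℝ) : ℝ :=
  fderiv ℝ f x (Pi.single i 1)

/-- Christoffel symbols of the second kind of the metric `gMetric`:
`Γᵏᵢⱼ = ½ Σₗ gᵏˡ (∂ᵢ g_{lj} + ∂ⱼ g_{li} − ∂ₗ g_{ij})`, where `gᵏˡ` are the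
entries of the inverse matrix of `g`. -/
noncomputable def Γ (k i j : Fin 4) (x : Fin 4 → ℝ) : ℝ :=
  (1 / 2) * ∑ l : Fin 4, (gMetric x)⁻¹ k l *
    (pd (fun y => gMetric y l j) i x + pd (fun y => gMetric y l i) j x
      - pd (fun y => gMetric y i j) l x)

open ContinuousLinearMap

section aux
variable {x : Fin 4 → ℝ} (hP : x 3 ≠ 0)

lemma h3' : HasFDerivAt (fun y : Fin 4 → ℝ => y 3)
    (proj 3 : (Fin 4 → ℝ) →L[ℝ] ℝ) x := hasFDerivAt_apply 3 x

lemma h1' : HasFDerivAt (fun y : Fin 4 → ℝ => y 1)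
    (proj 1 : (Fin 4 → ℝ) →L[ℝ] ℝ) x := hasFDerivAt_apply 1 x

include hP in
lemma hA : HasFDerivAt (fun y : Fin 4 → ℝ => ((y 3) ^ 2)⁻¹)
    ((-2 / (x 3) ^ 3) • (proj 3 : (Fin 4 → ℝ) →L[ℝ] ℝ)) x := by
  have hd : HasDerivAt (fun t : ℝ => (t ^ 2)⁻¹) (-2 / (x 3) ^ 3) (x 3) := by
    have := (hasDerivAt_pow 2 (x 3)).inv (pow_ne_zero 2 hP)
    refine this.congr_deriv ?_
    field_simp
    ring
  have := hd.comp_hasFDerivAt x h3'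
  exact this

include hP in
lemma pd1 (c : Fin 4) : pd (fun y => 1 / (y 3) ^ 2) c x
    = if c = 3 then -2 / (x 3) ^ 3 else 0 := by
  have h := hA hP
  simp only [one_div] at *
  rw [pd, h.fderiv]
  fin_cases c <;> simp [Pi.single_apply]

include hP in
lemma pd2 (c : Fin 4) : pd (fun y => -(y 1) / (y 3) ^ 2) c x
    = if c = 1 then -(1 / (x 3) ^ 2)
      else if c = 3 then 2 * x 1 / (x 3) ^ 3 else 0 := by
  have h : HasFDerivAt (fun y : Fin 4 → ℝ => -(y 1) / (y 3) ^ 2)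
      ((-(x 1)) • ((-2 / (x 3) ^ 3) • (proj 3 : (Fin 4 → ℝ) →L[ℝ] ℝ))
        + (((x 3) ^ 2)⁻¹) • (-(proj 1 : (Fin 4 → ℝ) →L[ℝ] ℝ))) x := by
    have := (h1'.neg).mul (hA hP)
    simp only [div_eq_mul_inv]
    exact this
  rw [pd, h.fderiv]
  fin_cases c <;> (simp [Pi.single_apply]; try field_simp) <;> try ring

include hP in
lemma pd3 (c : Fin 4) : pd (fun y => 1 + (y 1) ^ 2 / (y 3) ^ 2) c x
    = if c = 1 then 2 * x 1 / (x 3) ^ 2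
      else if c = 3 then -2 * (x 1) ^ 2 / (x 3) ^ 3 else 0 := by
  have hsq : HasFDerivAt (fun y : Fin 4 → ℝ => (y 1) ^ 2)
      ((2 * x 1) • (proj 1 : (Fin 4 → ℝ) →L[ℝ] ℝ)) x := by
    have := h1'.mul (h1' (x := x))
    simp only [← sq] at this
    refine this.congr_fderiv ?_
    module
  have h : HasFDerivAt (fun y : Fin 4 → ℝ => 1 + (y 1) ^ 2 / (y 3) ^ 2)
      ((x 1 ^ 2) • ((-2 / (x 3) ^ 3) • (proj 3 : (Fin 4 → ℝ) →L[ℝ] ℝ))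
        + (((x 3) ^ 2)⁻¹) • ((2 * x 1) • (proj 1 : (Fin 4 → ℝ) →L[ℝ] ℝ))) x := by
    have := (hsq.mul (hA hP)).const_add 1
    simpa [div_eq_mul_inv] using this
  rw [pd, h.fderiv]
  fin_cases c <;> (simp [Pi.single_apply]; try field_simp) <;> try ring

lemma pdconst (a : ℝ) (c : Fin 4) : pd (fun _ => a) c x = 0 := by
  simp [pd]

lemma gInv (hP : x 3 ≠ 0) :
    (gMetric x)⁻¹ = !![(x 3) ^ 2 + (x 1) ^ 2, 0, x 1, 0;
      0, 1, 0, 0; x 1, 0, 1, 0; 0, 0, 0, 1] := by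
  apply Matrix.inv_eq_right_inv
  ext i j
  fin_cases i <;> fin_cases j <;>
    (simp [gMetric, Matrix.mul_apply, Fin.sum_univ_four]; try field_simp) <;>
      first | (simp [Matrix.vecHead, Matrix.vecTail]) | ring

end aux

/-- The claimed values of the Christoffel symbols (with `I = x 1`, `P = x 3`),
including the symmetric counterparts `Γᵏᵢⱼ = Γᵏⱼᵢ`; all components not listed
are zero.  (Indices: 1 = G ↦ 0, 2 = I ↦ 1, 3 = E ↦ 2, 4 = P ↦ 3.) -/
noncomputable def ΓExpected (x : Fin 4 → ℝ) (k i j : Fin 4) : ℝ :=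
  let I := x 1
  let P := x 3
  if (k, i, j) = (0, 0, 1) ∨ (k, i, j) = (0, 1, 0) then -I / (2 * P ^ 2)
  else if (k, i, j) = (0, 0, 3) ∨ (k, i, j) = (0, 3, 0) then -1 / P
  else if (k, i, j) = (0, 1, 2) ∨ (k, i, j) = (0, 2, 1) then
    -(P ^ 2 - I ^ 2) / (2 * P ^ 2)
  else if (k, i, j) = (0, 2, 3) ∨ (k, i, j) = (0, 3, 2) then I / P
  else if (k, i, j) = (1, 0, 2) ∨ (k, i, j) = (1, 2, 0) then 1 / (2 * P ^ 2)
  else if (k, i, j) = (1, 2, 2) then -I / P ^ 2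
  else if (k, i, j) = (2, 0, 1) ∨ (k, i, j) = (2, 1, 0) then -1 / (2 * P ^ 2)
  else if (k, i, j) = (2, 1, 2) ∨ (k, i, j) = (2, 2, 1) then I / (2 * P ^ 2)
  else if (k, i, j) = (3, 0, 0) then 1 / P ^ 3
  else if (k, i, j) = (3, 0, 2) ∨ (k, i, j) = (3, 2, 0) then -I / P ^ 3
  else if (k, i, j) = (3, 2, 2) then I ^ 2 / P ^ 3
  else 0

set_option maxHeartbeats 4000000 in
/-- On `{P ≠ 0}`, the Christoffel symbols of the second kind of the metric `g`
take exactly the claimed values (the listed nonzero ones, together with their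
symmetric counterparts; all others vanish). -/
theorem christoffel_symbols (x : Fin 4 → ℝ) (hP : x 3 ≠ 0) (k i j : Fin 4) :
    Γ k i j x = ΓExpected x k i j := by
  have h4 : ∀ m : Fin 4, m = 0 ∨ m = 1 ∨ m = 2 ∨ m = 3 := by decide
  rw [Γ, gInv hP]
  rcases h4 k with rfl | rfl | rfl | rfl <;>
    rcases h4 i with rfl | rfl | rfl | rfl <;>
      rcases h4 j with rfl | rfl | rfl | rfl <;>
  · simp only [Fin.sum_univ_four, gMetric, Matrix.of_apply, Matrix.cons_val_zero,
      Matrix.cons_val_one, Matrix.head_cons, Matrix.cons_val_two, Matrix.tail_cons,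
      Matrix.cons_val_three, Matrix.head_fin_const, Matrix.cons_val', Matrix.empty_val',
      Matrix.cons_val_fin_one, pd1 hP, pd2 hP, pd3 hP, pdconst, Fin.reduceEq, reduceIte,
      ΓExpected, Prod.mk.injEq]
    norm_num
    try field_simp
    try ring
end

section
/- A twice-differentiable curve t ↦ (G(t), I(t), E(t), P(t)) with P(t) ≠ 0 satisfies the geodesic equation ẍᵏ + Σᵢⱼ Γᵏᵢⱼ ẋⁱ ẋʲ = 0 of the metric g if and only if it satisfies the system: Ï + (1/P²) Ġ Ė − (I/P²) Ė² = 0; Ë − (1/P²) Ġ İ + (I/P²) Ė İ = 0; P̈ + (1/P³) Ġ² − (2I/P³) Ġ Ė + (I²/P³) Ė² = 0; G̈ − (I/P²) Ġ İ − (2/P) Ġ Ṗ − ((P²−I²)/P²) İ Ė + (2I/P) Ė Ṗ = 0. -/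
/- Coordinates on ℝ⁴: index 0 = G (x¹), 1 = I (x²), 2 = E (x³), 3 = P (x⁴). -/

open scoped Matrix

/-!
The metric is block diagonal with a constant `(I, P)` block, and on the `(G, E)` block its
inverse is the polynomial matrix `[[P² + I², I], [I, 1]]`. Only `g₁₁ = 1/P²`, `g₁₃ = −I/P²` and
`g₃₃ = 1 + I²/P²` vary, and only in `I` and `P`, so every Christoffel symbol is an explicit rational
function of `(I, P)`. Contracting `Γᵏᵢⱼ` with `ẋⁱ ẋʲ` gives exactly the quadratic terms of the four
displayed equations.
-/

theorem pd_eq_of_hasFDerivAt {f : (Fin 4 → ℝ) → ℝ} {L : (Fin 4 → ℝ) →L[ℝ] ℝ}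
    {x : Fin 4 → ℝ} (h : HasFDerivAt f L x) (i : Fin 4) :
    pd f i x = L (Pi.single i 1) := by
  rw [pd, h.fderiv]

theorem pd_const (a : ℝ) (i : Fin 4) (x : Fin 4 → ℝ) : pd (fun _ => a) i x = 0 := by
  simp [pd]

theorem hasFDerivAt_one_div_sq {ι : Type*} [Fintype ι] {x : ι → ℝ} {k : ι} (hx : x k ≠ 0) :
    HasFDerivAt (fun y : ι → ℝ => 1 / y k ^ 2)
      ((-2 / x k ^ 3) • ContinuousLinearMap.proj (R := ℝ) (φ := fun _ : ι => ℝ) k) x := by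
  have hinv : HasDerivAt (fun u : ℝ => 1 / u ^ 2) (-2 / x k ^ 3) (x k) := by
    refine ((hasDerivAt_const _ 1).fun_div (hasDerivAt_pow 2 (x k))
      (pow_ne_zero 2 hx)).congr_deriv ?_
    field_simp
    ring
  exact hinv.comp_hasFDerivAt (h₂ := fun u : ℝ => 1 / u ^ 2) (f := fun y : ι → ℝ => y k) x
    (hasFDerivAt_apply k x)

theorem pd_one_div_sq {x : Fin 4 → ℝ} {k : Fin 4} (hx : x k ≠ 0) (i : Fin 4) :
    pd (fun y => 1 / y k ^ 2) i x = -2 * Pi.single (M := fun _ => ℝ) i 1 k / x k ^ 3 := by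
  rw [pd_eq_of_hasFDerivAt (hasFDerivAt_one_div_sq hx)]
  simp only [ContinuousLinearMap.smul_apply, ContinuousLinearMap.proj_apply, smul_eq_mul]
  ring

theorem pd_neg_div_sq {x : Fin 4 → ℝ} {j k : Fin 4} (hx : x k ≠ 0) (i : Fin 4) :
    pd (fun y => -y j / y k ^ 2) i x =
      -Pi.single (M := fun _ => ℝ) i 1 j / x k ^ 2
        + 2 * x j * Pi.single (M := fun _ => ℝ) i 1 k / x k ^ 3 := by
  have hf := (hasFDerivAt_apply j x).fun_neg.fun_mul (hasFDerivAt_one_div_sq hx)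
  simp only [mul_one_div] at hf
  rw [pd_eq_of_hasFDerivAt hf]
  simp only [ContinuousLinearMap.add_apply, ContinuousLinearMap.smul_apply,
    ContinuousLinearMap.neg_apply, ContinuousLinearMap.proj_apply, smul_eq_mul, nsmul_eq_mul]
  ring

theorem pd_one_add_sq_div_sq {x : Fin 4 → ℝ} {j k : Fin 4} (hx : x k ≠ 0) (i : Fin 4) :
    pd (fun y => 1 + y j ^ 2 / y k ^ 2) i x =
      2 * x j * Pi.single (M := fun _ => ℝ) i 1 j / x k ^ 2
        - 2 * x j ^ 2 * Pi.single (M := fun _ => ℝ) i 1 k / x k ^ 3 := by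
  have hf := (((hasFDerivAt_apply j x).pow 2).fun_mul (hasFDerivAt_one_div_sq hx)).const_add 1
  simp only [mul_one_div] at hf
  rw [pd_eq_of_hasFDerivAt hf]
  simp only [ContinuousLinearMap.add_apply, ContinuousLinearMap.smul_apply,
    ContinuousLinearMap.neg_apply, ContinuousLinearMap.proj_apply, smul_eq_mul, nsmul_eq_mul]
  ring

theorem gMetric_inv {x : Fin 4 → ℝ} (hx : x 3 ≠ 0) :
    (gMetric x)⁻¹ =
      !![x 3 ^ 2 + x 1 ^ 2, 0, x 1, 0;
         0, 1, 0, 0;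
         x 1, 0, 1, 0;
         0, 0, 0, 1] := by
  refine Matrix.inv_eq_right_inv ?_
  ext i j
  fin_cases i <;> fin_cases j <;> simp [gMetric, Matrix.mul_apply, Fin.sum_univ_four] <;>
    field_simp <;> ring

noncomputable def christoffelForm (x v : Fin 4 → ℝ) : Fin 4 → ℝ :=
  ![-(x 1 / x 3 ^ 2) * v 0 * v 1 - (2 / x 3) * v 0 * v 3
      - ((x 3 ^ 2 - x 1 ^ 2) / x 3 ^ 2) * v 1 * v 2 + (2 * x 1 / x 3) * v 2 * v 3,
    (1 / x 3 ^ 2) * v 0 * v 2 - (x 1 / x 3 ^ 2) * v 2 * v 2,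
    -(1 / x 3 ^ 2) * v 0 * v 1 + (x 1 / x 3 ^ 2) * v 1 * v 2,
    (1 / x 3 ^ 3) * v 0 * v 0 - (2 * x 1 / x 3 ^ 3) * v 0 * v 2
      + (x 1 ^ 2 / x 3 ^ 3) * v 2 * v 2]

theorem sum_Γ_mul_mul {x : Fin 4 → ℝ} (hx : x 3 ≠ 0) (v : Fin 4 → ℝ) (k : Fin 4) :
    ∑ i, ∑ j, Γ k i j x * v i * v j = christoffelForm x v k := by
  simp only [Γ, gMetric_inv hx]
  simp only [gMetric, Fin.sum_univ_four, Matrix.of_apply, Matrix.cons_val,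
    pd_one_div_sq hx, pd_neg_div_sq hx, pd_one_add_sq_div_sq hx, pd_const,
    Pi.single_apply, Fin.reduceEq, if_true, if_false]
  fin_cases k <;>
    simp only [christoffelForm, Fin.zero_eta, Fin.mk_one, Fin.reduceFinMk, Matrix.cons_val] <;>
    field_simp <;> ring

theorem geodesic_equations_general (c : ℝ → (Fin 4 → ℝ))
    (hP : ∀ t : ℝ, c t 3 ≠ 0) :
    (∀ t : ℝ, ∀ k : Fin 4,
        deriv (deriv (fun s => c s k)) t
          + ∑ i : Fin 4, ∑ j : Fin 4,
              Γ k i j (c t) * deriv (fun s => c s i) t * deriv (fun s => c s j) t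
          = 0) ↔
    (∀ t : ℝ,
      let G := c t 0; let I := c t 1; let P := c t 3
      let G' := deriv (fun s => c s 0) t
      let I' := deriv (fun s => c s 1) t
      let E' := deriv (fun s => c s 2) t
      let P' := deriv (fun s => c s 3) t
      let G'' := deriv (deriv (fun s => c s 0)) t
      let I'' := deriv (deriv (fun s => c s 1)) t
      let E'' := deriv (deriv (fun s => c s 2)) t
      let P'' := deriv (deriv (fun s => c s 3)) t
      I'' + (1 / P ^ 2) * G' * E' - (I / P ^ 2) * E' * E' = 0 ∧
      E'' - (1 / P ^ 2) * G' * I' + (I / P ^ 2) * E' * I' = 0 ∧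
      P'' + (1 / P ^ 3) * G' * G' - (2 * I / P ^ 3) * G' * E'
        + (I ^ 2 / P ^ 3) * E' * E' = 0 ∧
      G'' - (I / P ^ 2) * G' * I' - (2 / P) * G' * P'
        - ((P ^ 2 - I ^ 2) / P ^ 2) * I' * E' + (2 * I / P) * E' * P' = 0) := by
  refine forall_congr' fun t => ?_
  simp only [sum_Γ_mul_mul (hP t), Fin.forall_fin_succ, IsEmpty.forall_iff, and_true,
    Fin.reduceSucc, christoffelForm, Matrix.cons_val]
  constructor
  · rintro ⟨eqG, eqI, eqE, eqP⟩
    exact ⟨by linear_combination eqI, by linear_combination eqE, by linear_combination eqP,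
      by linear_combination eqG⟩
  · rintro ⟨eqI, eqE, eqP, eqG⟩
    exact ⟨by linear_combination eqG, by linear_combination eqI, by linear_combination eqE,
      by linear_combination eqP⟩

/-- A twice-differentiable curve `t ↦ (G(t), I(t), E(t), P(t))` with
`P(t) ≠ 0` satisfies the geodesic equation
`ẍᵏ + Σᵢⱼ Γᵏᵢⱼ ẋⁱ ẋʲ = 0` of the metric `g` if and only if it satisfies
the displayed system of four equations (with `Ġ, İ, Ė, Ṗ` the derivatives
of the coordinates `G = c · 0`, `I = c · 1`, `E = c · 2`, `P = c · 3`). -/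
theorem geodesic_equations (c : ℝ → (Fin 4 → ℝ))
    (hc : ∀ k : Fin 4, Differentiable ℝ (fun t => c t k))
    (hc' : ∀ k : Fin 4, Differentiable ℝ (deriv (fun t => c t k)))
    (hP : ∀ t : ℝ, c t 3 ≠ 0) :
    (∀ t : ℝ, ∀ k : Fin 4,
        deriv (deriv (fun s => c s k)) t
          + ∑ i : Fin 4, ∑ j : Fin 4,
              Γ k i j (c t) * deriv (fun s => c s i) t * deriv (fun s => c s j) t
          = 0) ↔
    (∀ t : ℝ,
      let G := c t 0; let I := c t 1; let P := c t 3
      let G' := deriv (fun s => c s 0) t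
      let I' := deriv (fun s => c s 1) t
      let E' := deriv (fun s => c s 2) t
      let P' := deriv (fun s => c s 3) t
      let G'' := deriv (deriv (fun s => c s 0)) t
      let I'' := deriv (deriv (fun s => c s 1)) t
      let E'' := deriv (deriv (fun s => c s 2)) t
      let P'' := deriv (deriv (fun s => c s 3)) t
      I'' + (1 / P ^ 2) * G' * E' - (I / P ^ 2) * E' * E' = 0 ∧
      E'' - (1 / P ^ 2) * G' * I' + (I / P ^ 2) * E' * I' = 0 ∧
      P'' + (1 / P ^ 3) * G' * G' - (2 * I / P ^ 3) * G' * E'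
        + (I ^ 2 / P ^ 3) * E' * E' = 0 ∧
      G'' - (I / P ^ 2) * G' * I' - (2 / P) * G' * P'
        - ((P ^ 2 - I ^ 2) / P ^ 2) * I' * E' + (2 * I / P) * E' * P' = 0) :=
  geodesic_equations_general c hP
end

section
/- The distribution spanned by X₁, X₂, X₃, X₄ is bracket generating of step 2: at every point p ∈ ℝ⁵, the vectors X₁(p), X₂(p), X₃(p), X₄(p) together with [X₁,X₂](p) span all of ℝ⁵. -/
/- Coordinates on ℝ⁵: index 0 = G, 1 = I, 2 = E, 3 = P, 4 = Q. -/

/-- `X₁ = ∂/∂I`. -/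
noncomputable def X₁ : (Fin 5 → ℝ) → (Fin 5 → ℝ) := fun _ => Pi.single 1 1

/-- `X₂ = I ∂/∂G + ∂/∂E`. -/
noncomputable def X₂ : (Fin 5 → ℝ) → (Fin 5 → ℝ) :=
  fun x => (x 1) • (Pi.single 0 1 : Fin 5 → ℝ) + Pi.single 2 1

/-- `X₃ = ∂/∂P`. -/
noncomputable def X₃ : (Fin 5 → ℝ) → (Fin 5 → ℝ) := fun _ => Pi.single 3 1

/-- `X₄ = ∂/∂Q − P ∂/∂G`. -/
noncomputable def X₄ : (Fin 5 → ℝ) → (Fin 5 → ℝ) :=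
  fun x => (Pi.single 4 1 : Fin 5 → ℝ) - (x 3) • (Pi.single 0 1 : Fin 5 → ℝ)

/-- `X₅ = ∂/∂G`. -/
noncomputable def X₅ : (Fin 5 → ℝ) → (Fin 5 → ℝ) := fun _ => Pi.single 0 1

/-- Lie bracket of vector fields on ℝ⁵, viewed as smooth maps `V : ℝ⁵ → ℝ⁵`:
`[V,W](x) = DW(x)·V(x) − DV(x)·W(x)`. -/
noncomputable def lieBracket (V W : (Fin 5 → ℝ) → (Fin 5 → ℝ)) :
    (Fin 5 → ℝ) → (Fin 5 → ℝ) :=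
  fun x => fderiv ℝ W x (V x) - fderiv ℝ V x (W x)


/-
The fields `X₁ = ∂_I` and `X₃ = ∂_P` are already coordinate fields, and `[X₁, X₂] = ∂_G` because
only the coefficient `I` of `X₂` varies, and it varies in the direction of `X₁`. Subtracting
multiples of `∂_G` from `X₂` and `X₄` recovers `∂_E` and `∂_Q`, so the span contains the
standard basis at every point.
-/

theorem Submodule.eq_top_of_forall_single_mem {R ι : Type*} [CommSemiring R] [Fintype ι]
    [DecidableEq ι] {W : Submodule R (ι → R)} (h : ∀ i, (Pi.single i 1 : ι → R) ∈ W) : W = ⊤ := by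
  rw [eq_top_iff, ← (Pi.basisFun R ι).span_eq, Submodule.span_le]
  rintro _ ⟨i, rfl⟩
  simpa using h i

theorem hasFDerivAt_X₂ (p : Fin 5 → ℝ) :
    HasFDerivAt X₂ ((ContinuousLinearMap.proj 1 : (Fin 5 → ℝ) →L[ℝ] ℝ).smulRight (X₅ p)) p :=
  ((ContinuousLinearMap.proj 1 : (Fin 5 → ℝ) →L[ℝ] ℝ).smulRight (X₅ p)).hasFDerivAt.add_const _

theorem lieBracket_X₁_X₂ (p : Fin 5 → ℝ) : lieBracket X₁ X₂ p = X₅ p := by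
  have hX₁ : fderiv ℝ X₁ p = 0 := fderiv_const_apply _
  simp [lieBracket, (hasFDerivAt_X₂ p).fderiv, hX₁, X₁, X₅]

theorem X₂_apply (p : Fin 5 → ℝ) : X₂ p = p 1 • X₅ p + Pi.single 2 1 := rfl

theorem X₄_apply (p : Fin 5 → ℝ) : X₄ p = Pi.single 4 1 - p 3 • X₅ p := rfl

/-- The distribution spanned by `X₁, X₂, X₃, X₄` is bracket generating of step 2:
at every point `p` of ℝ⁵, the vectors `X₁(p), X₂(p), X₃(p), X₄(p)` together
with `[X₁,X₂](p)` span all of ℝ⁵. -/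
theorem roegen_distribution_bracket_generating (p : Fin 5 → ℝ) :
    Submodule.span ℝ {X₁ p, X₂ p, X₃ p, X₄ p, lieBracket X₁ X₂ p} = ⊤ := by
  set S := Submodule.span ℝ {X₁ p, X₂ p, X₃ p, X₄ p, lieBracket X₁ X₂ p}
  have hX₁ : X₁ p ∈ S := Submodule.subset_span (by simp)
  have hX₂ : X₂ p ∈ S := Submodule.subset_span (by simp)
  have hX₃ : X₃ p ∈ S := Submodule.subset_span (by simp)
  have hX₄ : X₄ p ∈ S := Submodule.subset_span (by simp)
  have hX₅ : X₅ p ∈ S := lieBracket_X₁_X₂ p ▸ Submodule.subset_span (by simp)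
  refine Submodule.eq_top_of_forall_single_mem fun i => ?_
  fin_cases i
  · exact hX₅
  · exact hX₁
  · simpa [X₂_apply] using S.sub_mem hX₂ (S.smul_mem (p 1) hX₅)
  · exact hX₃
  · simpa [X₄_apply] using S.add_mem hX₄ (S.smul_mem (p 3) hX₅)
end

section
/- Let x be a point of ℝ¹² with coordinates (m₁, g₁, I₁, e₁, P₁, q₁, m₂, g₂, I₂, e₂, P₂, q₂) such that m₁ ≠ 0 and m₂ ≠ 0. Then there exist real numbers ν₁, ν₂, a, b, c such that the covector d(m₁e₁ + m₂e₂) + ν₁ω₁ + ν₂ω₂ + a·d(m₁+m₂) + b·d(m₁g₁+m₂g₂) + c·d(m₁q₁+m₂q₂) vanishes at x if and only if I₁ = I₂ ≠ 0, P₁ = P₂, and g₁ + P₁q₁ − I₁e₁ = g₂ + P₂q₂ − I₂e₂ (equality of the economic Gibbs potentials μ = g + Pq − Ie of the two phases). -/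
/-!
Evaluated on the coordinate vectors, the covector vanishes iff in each phase the coefficients
of `dm, dg, de, dq` vanish. As `m ≠ 0`, these four equations say exactly that
`ν = -b m`, `b I = -1`, `c = b P` and `a = -b μ` with `μ = g + P q - I e`. Since the
multipliers `a, b, c` are shared by the two phases, they exist iff `I₁ = I₂ ≠ 0`
(then `b = -1/I₁ ≠ 0`), `P₁ = P₂` and `μ₁ = μ₂`.
-/

/- Coordinates on ℝ¹²:
   0 = m₁, 1 = g₁, 2 = I₁, 3 = e₁, 4 = P₁, 5 = q₁,
   6 = m₂, 7 = g₂, 8 = I₂, 9 = e₂, 10 = P₂, 11 = q₂. -/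

/-- Gibbs–Pfaff covector of phase 1 at the point `x`:
`ω₁ = dg₁ − I₁(x) de₁ + P₁(x) dq₁`. -/
noncomputable def ω₁ (x : Fin 12 → ℝ) : (Fin 12 → ℝ) → ℝ :=
  fun v => v 1 - x 2 * v 3 + x 4 * v 5

/-- Gibbs–Pfaff covector of phase 2 at the point `x`:
`ω₂ = dg₂ − I₂(x) de₂ + P₂(x) dq₂`. -/
noncomputable def ω₂ (x : Fin 12 → ℝ) : (Fin 12 → ℝ) → ℝ :=
  fun v => v 7 - x 8 * v 9 + x 10 * v 11

section
variable {𝕜 ι : Type*} [NontriviallyNormedField 𝕜] [Fintype ι]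

lemma fderiv_coord_add_coord (x v : ι → 𝕜) (i j : ι) :
    fderiv 𝕜 (fun y : ι → 𝕜 => y i + y j) x v = v i + v j := by
  rw [((hasFDerivAt_apply i x).fun_add (hasFDerivAt_apply j x)).fderiv]
  rfl

lemma fderiv_coord_mul_add_coord_mul (x v : ι → 𝕜) (i j k l : ι) :
    fderiv 𝕜 (fun y : ι → 𝕜 => y i * y j + y k * y l) x v
      = x i * v j + x j * v i + (x k * v l + x l * v k) := by
  rw [(((hasFDerivAt_apply i x).fun_mul (hasFDerivAt_apply j x)).fun_add
    ((hasFDerivAt_apply k x).fun_mul (hasFDerivAt_apply l x))).fderiv]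
  rfl

end

/-- The vanishing of the coefficients of `dm, dg, de, dq` of the covector in one phase. -/
def PhaseStationary (m g I e P q ν a b c : ℝ) : Prop :=
  e + a + b * g + c * q = 0 ∧ ν + b * m = 0 ∧ m - ν * I = 0 ∧ ν * P + c * m = 0

lemma phaseStationary_iff {m g I e P q ν a b c : ℝ} (hm : m ≠ 0) :
    PhaseStationary m g I e P q ν a b c ↔
      ν = -(b * m) ∧ b * I = -1 ∧ c = b * P ∧ a = -(b * (g + P * q - I * e)) := by
  constructor
  · rintro ⟨hdm, hdg, hde, hdq⟩
    have hν : ν = -(b * m) := by linear_combination hdg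
    have hbI : b * I = -1 := mul_left_cancel₀ hm (by linear_combination hde + I * hdg)
    have hc : c = b * P := mul_left_cancel₀ hm (by linear_combination hdq - P * hdg)
    exact ⟨hν, hbI, hc, by linear_combination hdm - q * hc - e * hbI⟩
  · rintro ⟨hν, hbI, hc, ha⟩
    subst hν hc ha
    exact ⟨by linear_combination e * hbI, by ring, by linear_combination m * hbI, by ring⟩

lemma lagrangian_covector_apply (x v : Fin 12 → ℝ) (ν₁ ν₂ a b c : ℝ) :
    fderiv ℝ (fun y : Fin 12 → ℝ => y 0 * y 3 + y 6 * y 9) x v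
        + ν₁ * ω₁ x v + ν₂ * ω₂ x v
        + a * fderiv ℝ (fun y : Fin 12 → ℝ => y 0 + y 6) x v
        + b * fderiv ℝ (fun y : Fin 12 → ℝ => y 0 * y 1 + y 6 * y 7) x v
        + c * fderiv ℝ (fun y : Fin 12 → ℝ => y 0 * y 5 + y 6 * y 11) x v
      = (x 3 + a + b * x 1 + c * x 5) * v 0 + (ν₁ + b * x 0) * v 1
          + (x 0 - ν₁ * x 2) * v 3 + (ν₁ * x 4 + c * x 0) * v 5
        + ((x 9 + a + b * x 7 + c * x 11) * v 6 + (ν₂ + b * x 6) * v 7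
          + (x 6 - ν₂ * x 8) * v 9 + (ν₂ * x 10 + c * x 6) * v 11) := by
  simp only [fderiv_coord_add_coord, fderiv_coord_mul_add_coord_mul, ω₁, ω₂]
  ring

lemma forall_lagrangian_covector_eq_zero_iff (x : Fin 12 → ℝ) (ν₁ ν₂ a b c : ℝ) :
    (∀ v : Fin 12 → ℝ,
      fderiv ℝ (fun y : Fin 12 → ℝ => y 0 * y 3 + y 6 * y 9) x v
        + ν₁ * ω₁ x v + ν₂ * ω₂ x v
        + a * fderiv ℝ (fun y : Fin 12 → ℝ => y 0 + y 6) x v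
        + b * fderiv ℝ (fun y : Fin 12 → ℝ => y 0 * y 1 + y 6 * y 7) x v
        + c * fderiv ℝ (fun y : Fin 12 → ℝ => y 0 * y 5 + y 6 * y 11) x v = 0) ↔
      PhaseStationary (x 0) (x 1) (x 2) (x 3) (x 4) (x 5) ν₁ a b c ∧
        PhaseStationary (x 6) (x 7) (x 8) (x 9) (x 10) (x 11) ν₂ a b c := by
  simp only [lagrangian_covector_apply]
  constructor
  · intro h
    have h_basis (i : Fin 12) := h (Pi.single i 1)
    exact ⟨⟨by simpa [Pi.single_apply] using h_basis 0, by simpa [Pi.single_apply] using h_basis 1, by simpa [Pi.single_apply] using h_basis 3,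
      by simpa [Pi.single_apply] using h_basis 5⟩, ⟨by simpa [Pi.single_apply] using h_basis 6, by simpa [Pi.single_apply] using h_basis 7,
      by simpa [Pi.single_apply] using h_basis 9, by simpa [Pi.single_apply] using h_basis 11⟩⟩
  · rintro ⟨⟨h₀, h₁, h₃, h₅⟩, h₆, h₇, h₉, h₁₁⟩ v
    simp only [h₀, h₁, h₃, h₅, h₆, h₇, h₉, h₁₁]
    ring

lemma exists_common_multiplier_iff {I₁ I₂ P₁ P₂ μ₁ μ₂ : ℝ} :
    (∃ b : ℝ, b * I₁ = -1 ∧ b * I₂ = -1 ∧ b * P₁ = b * P₂ ∧ b * μ₁ = b * μ₂) ↔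
      I₁ = I₂ ∧ I₁ ≠ 0 ∧ P₁ = P₂ ∧ μ₁ = μ₂ := by
  constructor
  · rintro ⟨b, hI₁, hI₂, hP, hμ⟩
    have hb : b ≠ 0 := left_ne_zero_of_mul (by rw [hI₁]; norm_num)
    exact ⟨mul_left_cancel₀ hb (hI₁.trans hI₂.symm), right_ne_zero_of_mul (by rw [hI₁]; norm_num),
      mul_left_cancel₀ hb hP, mul_left_cancel₀ hb hμ⟩
  · rintro ⟨rfl, hI, rfl, rfl⟩
    exact ⟨-I₁⁻¹, by field_simp, by field_simp, rfl, rfl⟩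

/-- At a point `x ∈ ℝ¹²` with `m₁ ≠ 0` and `m₂ ≠ 0`, there exist multipliers
`ν₁, ν₂, a, b, c` making the covector
`d(m₁e₁+m₂e₂) + ν₁ω₁ + ν₂ω₂ + a d(m₁+m₂) + b d(m₁g₁+m₂g₂) + c d(m₁q₁+m₂q₂)`
vanish at `x` if and only if `I₁ = I₂ ≠ 0`, `P₁ = P₂`, and the economic Gibbs
potentials `μ = g + Pq − Ie` of the two phases coincide. -/
theorem phase_equilibrium (x : Fin 12 → ℝ) (hm₁ : x 0 ≠ 0) (hm₂ : x 6 ≠ 0) :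
    (∃ ν₁ ν₂ a b c : ℝ, ∀ v : Fin 12 → ℝ,
        fderiv ℝ (fun y : Fin 12 → ℝ => y 0 * y 3 + y 6 * y 9) x v
          + ν₁ * ω₁ x v + ν₂ * ω₂ x v
          + a * fderiv ℝ (fun y : Fin 12 → ℝ => y 0 + y 6) x v
          + b * fderiv ℝ (fun y : Fin 12 → ℝ => y 0 * y 1 + y 6 * y 7) x v
          + c * fderiv ℝ (fun y : Fin 12 → ℝ => y 0 * y 5 + y 6 * y 11) x v
          = 0) ↔
    (x 2 = x 8 ∧ x 2 ≠ 0 ∧ x 4 = x 10 ∧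
      x 1 + x 4 * x 5 - x 2 * x 3 = x 7 + x 10 * x 11 - x 8 * x 9) := by
  simp only [forall_lagrangian_covector_eq_zero_iff, phaseStationary_iff hm₁,
    phaseStationary_iff hm₂]
  rw [← exists_common_multiplier_iff]
  constructor
  · rintro ⟨ν₁, ν₂, a, b, c, ⟨-, hI₁, rfl, rfl⟩, -, hI₂, hP, hμ⟩
    exact ⟨b, hI₁, hI₂, hP, neg_injective hμ⟩
  · rintro ⟨b, hI₁, hI₂, hP, hμ⟩
    exact ⟨_, _, _, b, _, ⟨rfl, hI₁, rfl, rfl⟩, rfl, hI₂, hP, by rw [hμ]⟩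
end

section
/- Let M > 0 and Q ∈ ℝ with Q² ≤ M², and set S = 2M² − Q² + 2M²√(1 − Q²/M²). Then S > 0 and M = ½√S + Q²/(2√S). -/
/-!
`S` is the square of the outer horizon radius `r₊ = M + √(M² − Q²)`, and `r₊` is a root of
`r² − 2 M r + Q² = 0`, which divided by `2 r₊` reads `M = r₊ / 2 + Q² / (2 r₊)`.
-/

open Real

lemma sqrt_one_sub_sq_div_sq {M : ℝ} (hM : 0 < M) (Q : ℝ) :
    √(1 - Q ^ 2 / M ^ 2) = √(M ^ 2 - Q ^ 2) / M := by
  rw [one_sub_div (by positivity), sqrt_div' _ (sq_nonneg M), sqrt_sq hM.le]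

lemma two_mul_sq_sub_sq_add_mul_sqrt_eq_sq {M Q : ℝ} (hM : 0 < M) (hQ : Q ^ 2 ≤ M ^ 2) :
    2 * M ^ 2 - Q ^ 2 + 2 * M ^ 2 * √(1 - Q ^ 2 / M ^ 2) = (M + √(M ^ 2 - Q ^ 2)) ^ 2 := by
  have ht : √(M ^ 2 - Q ^ 2) ^ 2 = M ^ 2 - Q ^ 2 := sq_sqrt (sub_nonneg.mpr hQ)
  rw [sqrt_one_sub_sq_div_sq hM]
  field_simp
  linear_combination -ht

lemma half_add_sq_div_two_mul_of_sq_eq {r M Q : ℝ} (hr : r ≠ 0) (h : Q ^ 2 = r * (2 * M - r)) :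
    r / 2 + Q ^ 2 / (2 * r) = M := by
  rw [h]
  field_simp
  ring

/-- Reissner–Nordström near-horizon relation: if `M > 0`, `Q² ≤ M²`, and
`S = 2M² − Q² + 2M²√(1 − Q²/M²)`, then `S > 0` and
`M = ½√S + Q²/(2√S)`. -/
theorem reissner_nordstrom_relation (M Q : ℝ) (hM : 0 < M) (hQ : Q ^ 2 ≤ M ^ 2)
    (S : ℝ) (hS : S = 2 * M ^ 2 - Q ^ 2 + 2 * M ^ 2 * Real.sqrt (1 - Q ^ 2 / M ^ 2)) :
    0 < S ∧ M = Real.sqrt S / 2 + Q ^ 2 / (2 * Real.sqrt S) := by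
  set t := √(M ^ 2 - Q ^ 2)
  have hSt : S = (M + t) ^ 2 := hS.trans (two_mul_sq_sub_sq_add_mul_sqrt_eq_sq hM hQ)
  have hr : 0 < M + t := add_pos_of_pos_of_nonneg hM (sqrt_nonneg _)
  have hroot : Q ^ 2 = (M + t) * (2 * M - (M + t)) := by
    linear_combination sq_sqrt (sub_nonneg.mpr hQ)
  refine ⟨hSt ▸ by positivity, ?_⟩
  rw [hSt, sqrt_sq hr.le, half_add_sq_div_two_mul_of_sq_eq hr.ne' hroot]
end
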